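/- Let $n \ge k+1$ and suppose that for every permutation $\sigma$ of $[n]$ and every edge $(u',v')$ of $X$, there exist $k$ internally vertex-disjoint paths in $\mathrm{FS}(X,Y)$ between $\sigma$ and $\sigma \circ (u'\ v')$, where $X$ is connected. Then $\mathrm{FS}(X,Y)$ is $k$-connected. -/

import Mathlib

open SimpleGraph

/-- The friends-and-strangers graph `FS X Y` of two graphs on `Fin n`:
vertices are permutations of `Fin n`, and `σ, τ` are adjacent iff
`τ = σ ∘ (i j)` for some edge `(i,j)` of `X` with `(σ i, σ j)` an edge of `Y`. -/
def FS {n : ℕ} (X Y : SimpleGraph (Fin n)) : SimpleGraph (Equiv.Perm (Fin n)) :=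
  SimpleGraph.fromRel (fun σ τ => ∃ i j : Fin n,
    X.Adj i j ∧ Y.Adj (σ i) (σ j) ∧ τ = σ * Equiv.swap i j)

/-- A graph is `k`-connected if removing any set of at most `k - 1` vertices
leaves the induced graph connected. -/
def KConnected {V : Type*} (G : SimpleGraph V) (k : ℕ) : Prop :=
  ∀ S : Set V, S.Finite → S.ncard < k → (G.induce (Sᶜ : Set V)).Connected

/-- The connectivity of a graph: the largest `k` such that it is `k`-connected. -/
noncomputable def connectivity {V : Type*} (G : SimpleGraph V) : ℕ :=
  sSup {k | KConnected G k}

/-- There exist `k` internally vertex-disjoint paths between `u` and `v`: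
paths sharing no vertices other than `u` and `v`. -/
def IntDisjPaths {V : Type*} (G : SimpleGraph V) (k : ℕ) (u v : V) : Prop :=
  ∃ P : Fin k → G.Path u v, ∀ i j : Fin k, i ≠ j →
    ∀ x : V, x ∈ (P i).1.support → x ∈ (P j).1.support → x = u ∨ x = v

/-- The star graph on `Fin n`, centered at the last vertex. -/
def starGraph (n : ℕ) : SimpleGraph (Fin n) :=
  SimpleGraph.fromRel (fun _ j => j.val = n - 1)

/-!
Each edge `σ — σ * swap u v` of the transposition graph of `X` (that is, of `FS X K_n`) can be
replaced by one of the `k` internally disjoint `FS X Y`-paths between its ends, and fewer than `k`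
deleted vertices miss at least one of them. So it suffices that the transposition graph stays
connected after deleting any `n - 2` vertices.

This is proved by adding the vertices of `X` one at a time, each new vertex `l` attached to some
`p` already present. The permutations supported on `A ∪ {l}` split into blocks by the image of
`l`, each a copy of the permutations supported on `A`, so induction applies to every block holding
few deleted vertices. At most one block holds many, and then it holds all of them, so each of its
vertices has an undeleted neighbour `σ * swap l p` in another block. Two good blocks `a, b` are
joined by an edge `σ — σ * swap l p` with `{σ l, σ p} = {a, b}`, directly or through a third
block, because each deleted vertex blocks only the pair `{σ l, σ p}`.
-/

open Equiv Finset

variable {V : Type*}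

namespace SimpleGraph

theorem Connected.induction_on_insert_adj [Fintype V] [DecidableEq V] {X : SimpleGraph V}
    (hX : X.Connected) {P : Finset V → Prop} {v : V} (hv : P {v})
    (insert_adj : ∀ A l p, l ∉ A → p ∈ A → X.Adj l p → P A → P (insert l A)) : P univ := by
  suffices ∀ m (A : Finset V), Aᶜ.card = m → v ∈ A → P A → P univ from
    this _ {v} rfl (mem_singleton_self v) hv
  intro m
  induction m with
  | zero =>
    intro A hA _ hPA
    rw [card_eq_zero, compl_eq_empty_iff] at hA
    exact hA ▸ hPA
  | succ m ih =>
    intro A hA hvA hPA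
    obtain ⟨w, hw⟩ : Aᶜ.Nonempty := card_pos.mp (by omega)
    obtain ⟨d, -, hdA, hdA'⟩ :=
      (hX.preconnected v w).some.exists_boundary_dart (A : Set V) hvA (by simpa using hw)
    refine ih (insert d.snd A) ?_ (mem_insert_of_mem hvA)
      (insert_adj A _ _ hdA' hdA d.adj.symm hPA)
    rw [card_compl] at hA ⊢
    rw [card_insert_of_notMem hdA']
    omega

theorem Reachable.induce_of_walk {G : SimpleGraph V} {s : Set V} {u v : V} (w : G.Walk u v)
    (hw : ∀ x ∈ w.support, x ∈ s) :
    (G.induce s).Reachable ⟨u, hw _ w.start_mem_support⟩ ⟨v, hw _ w.end_mem_support⟩ :=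
  ⟨w.induce s hw⟩

theorem Preconnected.of_adj_reachable {G H : SimpleGraph V} (hG : G.Preconnected)
    (h : ∀ u v, G.Adj u v → H.Reachable u v) : H.Preconnected := by
  simp only [Preconnected, reachable_iff_reflTransGen] at hG h ⊢
  exact fun u v => Relation.ReflTransGen.lift' id h _ _ (hG u v)

end SimpleGraph

theorem KConnected.mono {G : SimpleGraph V} {j k : ℕ} (hG : KConnected G k) (hjk : j ≤ k) :
    KConnected G j :=
  fun S hS hSj => hG S hS (hSj.trans_le hjk)

theorem IntDisjPaths.reachable_induce_compl {H : SimpleGraph V} {k : ℕ} {u v : V}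
    (h : IntDisjPaths H k u v) {S : Set V} (hS : S.Finite) (hSk : S.ncard < k) (hu : u ∉ S)
    (hv : v ∉ S) : (H.induce Sᶜ).Reachable ⟨u, hu⟩ ⟨v, hv⟩ := by
  obtain ⟨P, hP⟩ := h
  obtain ⟨i, hi⟩ : ∃ i, ∀ x ∈ (P i).1.support, x ∉ S := by
    by_contra! hmeet
    choose g hgP hgS using hmeet
    have hg : Set.InjOn g Set.univ := by
      intro i _ j _ hij
      by_contra hne
      rcases hP i j hne (g i) (hgP i) (hij ▸ hgP j) with h | h
      · exact hu (h ▸ hgS i)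
      · exact hv (h ▸ hgS i)
    have := Set.ncard_le_ncard_of_injOn g (fun i _ => hgS i) hg hS
    simp only [Set.ncard_univ, Nat.card_eq_fintype_card, Fintype.card_fin] at this
    omega
  exact Reachable.induce_of_walk (P i).1 hi

theorem KConnected.of_adj_intDisjPaths {G H : SimpleGraph V} {k : ℕ} (hG : KConnected G k)
    (h : ∀ u v, G.Adj u v → IntDisjPaths H k u v) : KConnected H k := by
  intro S hS hSk
  have hGS := hG S hS hSk
  have := hGS.nonempty
  exact ⟨hGS.preconnected.of_adj_reachable fun u v huv =>
    (h u v huv).reachable_induce_compl hS hSk u.2 v.2⟩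

def permsOn (A : Finset V) : Subgroup (Perm V) := fixingSubgroup (Perm V) (↑A : Set V)ᶜ

section PermsOn

variable {A B : Finset V} {σ : Perm V}

theorem mem_permsOn : σ ∈ permsOn A ↔ ∀ x ∉ A, σ x = x := by
  simp [permsOn, mem_fixingSubgroup_iff, Perm.smul_def]

theorem permsOn_mono (h : A ⊆ B) : permsOn A ≤ permsOn B :=
  fixingSubgroup_antitone _ _ (Set.compl_subset_compl.mpr (coe_subset.mpr h))

theorem apply_mem_of_mem_permsOn (hσ : σ ∈ permsOn A) {x : V} (hx : x ∈ A) : σ x ∈ A := by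
  by_contra h
  exact h (by rwa [σ.injective (mem_permsOn.mp hσ _ h)])

theorem permsOn_singleton (v : V) : permsOn {v} = ⊥ := by
  refine (Subgroup.eq_bot_iff_forall _).mpr fun σ hσ => Equiv.ext fun x => ?_
  by_cases hx : x = v
  · subst hx
    simpa using apply_mem_of_mem_permsOn hσ (mem_singleton_self x)
  · exact mem_permsOn.mp hσ x (by simpa using hx)

theorem permsOn_univ [Fintype V] : permsOn (univ : Finset V) = ⊤ :=
  (Subgroup.eq_top_iff' _).mpr fun _ => mem_permsOn.mpr fun x hx => absurd (mem_univ x) hx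

variable [DecidableEq V]

theorem swap_mem_permsOn {i j : V} (hi : i ∈ A) (hj : j ∈ A) : swap i j ∈ permsOn A :=
  mem_permsOn.mpr fun _ hx =>
    swap_apply_of_ne_of_ne (by rintro rfl; exact hx hi) (by rintro rfl; exact hx hj)

theorem exists_mem_permsOn_apply_eq {l p a b : V} (hl : l ∈ A) (hp : p ∈ A) (hlp : l ≠ p)
    (ha : a ∈ A) (hb : b ∈ A) (hab : a ≠ b) : ∃ σ ∈ permsOn A, σ l = a ∧ σ p = b := by
  set q := swap l a b
  have hq : q ∈ A := apply_mem_of_mem_permsOn (swap_mem_permsOn hl ha) hb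
  have hlq : l ≠ q := by
    rw [Ne, eq_comm, swap_apply_eq_iff, swap_apply_left]
    exact hab.symm
  refine ⟨swap l a * swap p q, mul_mem (swap_mem_permsOn hl ha) (swap_mem_permsOn hp hq), ?_, ?_⟩
  · simp [swap_apply_of_ne_of_ne hlp hlq]
  · simp [q]

end PermsOn

section TranspositionGraph

variable [DecidableEq V]

/-- For `V = Fin n` this is `FS X ⊤`: when `Y` is complete, every edge of `X` may be swapped. -/
def transpositionGraph (X : SimpleGraph V) : SimpleGraph (Perm V) where
  Adj σ τ := ∃ i j, X.Adj i j ∧ τ = σ * swap i j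
  symm := ⟨by
    rintro σ _ ⟨i, j, hij, rfl⟩
    exact ⟨i, j, hij, by rw [mul_assoc, swap_mul_self, mul_one]⟩⟩
  loopless := ⟨by
    rintro σ ⟨i, j, hij, h⟩
    exact hij.ne (swap_eq_one_iff.mp (left_eq_mul.mp h))⟩

theorem transpositionGraph_adj_mul_left {X : SimpleGraph V} (g : Perm V) {σ τ : Perm V}
    (h : (transpositionGraph X).Adj σ τ) : (transpositionGraph X).Adj (g * σ) (g * τ) := by
  obtain ⟨i, j, hij, rfl⟩ := h
  exact ⟨i, j, hij, (mul_assoc _ _ _).symm⟩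

end TranspositionGraph

/-- The edge `s(a, b)` and the paths `a - d - b`, `d ∈ B \ {a, b}`, are `#B - 1` pairwise
edge-disjoint routes from `a` to `b`, so fewer than `#B - 1` deleted edges cannot block all. -/
theorem sym2_notMem_or_exists_detour [DecidableEq V] {B : Finset V} {E : Finset (Sym2 V)}
    (hE : E.card + 2 ≤ B.card) {a b : V} (ha : a ∈ B) (hb : b ∈ B) (hab : a ≠ b) :
    s(a, b) ∉ E ∨ ∃ d ∈ B, d ≠ a ∧ d ≠ b ∧ s(a, d) ∉ E ∧ s(d, b) ∉ E := by
  by_contra! h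
  obtain ⟨habE, hdetour⟩ := h
  let e d := if s(a, d) ∈ E then s(a, d) else s(d, b)
  have he : ∀ d ∈ (B.erase a).erase b, e d ∈ E.erase s(a, b) := by
    intro d hd
    simp only [mem_erase] at hd
    by_cases hd' : s(a, d) ∈ E <;> simp_all [e]
  have hinj : Set.InjOn e ((B.erase a).erase b : Finset V) := by
    intro d hd d' hd' hdd'
    simp only [coe_erase, Set.mem_sdiff, Set.mem_singleton_iff, mem_coe] at hd hd'
    by_cases h1 : s(a, d) ∈ E <;> by_cases h2 : s(a, d') ∈ E <;> simp_all [e]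
  have := card_le_card_of_injOn e he hinj
  rw [card_erase_of_mem habE, card_erase_of_mem (mem_erase.mpr ⟨hab.symm, hb⟩),
    card_erase_of_mem ha] at this
  have := card_pos.mpr ⟨_, habE⟩
  omega

abbrev transpositionGraphOn [DecidableEq V] (X : SimpleGraph V) (A : Finset V)
    (S : Finset (Perm V)) : SimpleGraph ↥((permsOn A : Set (Perm V)) \ ↑S) :=
  (transpositionGraph X).induce _

section InsertStep

variable [DecidableEq V] {X : SimpleGraph V} {A : Finset V} {S : Finset (Perm V)}
  {l p a b : V}

def blockOf (S : Finset (Perm V)) (l a : V) : Finset (Perm V) := S.filter (· l = a)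

def blockedPairs (S : Finset (Perm V)) (l p : V) : Finset (Sym2 V) :=
  S.image fun s => s(s l, s p)

theorem forall_apply_eq_of_lt_card_blockOf (hS : S.card < A.card)
    (ha : A.card - 2 < (blockOf S l a).card) : ∀ s ∈ S, s l = a :=
  card_filter_eq_iff.mp (le_antisymm (card_filter_le _ _) (by simp only [blockOf] at ha; omega))

theorem eq_of_lt_card_blockOf (hS : S.card < A.card) (ha : A.card - 2 < (blockOf S l a).card)
    (hb : A.card - 2 < (blockOf S l b).card) : a = b := by
  obtain ⟨s, hs⟩ := card_pos.mp (show 0 < (blockOf S l a).card by omega)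
  have hsS := (mem_filter.mp hs).1
  rw [← forall_apply_eq_of_lt_card_blockOf hS ha s hsS,
    forall_apply_eq_of_lt_card_blockOf hS hb s hsS]

theorem exists_adj_of_notMem_blockedPairs (hp : p ∈ A) (hlp : X.Adj l p) (ha : a ∈ insert l A)
    (hb : b ∈ insert l A) (hab : a ≠ b) (hfree : s(a, b) ∉ blockedPairs S l p) :
    ∃ σ τ : ↥((permsOn (insert l A) : Set (Perm V)) \ ↑S), σ.1 l = a ∧ τ.1 l = b ∧
      (transpositionGraphOn X (insert l A) S).Adj σ τ := by
  have hlpA : swap l p ∈ permsOn (insert l A) :=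
    swap_mem_permsOn (mem_insert_self l A) (mem_insert_of_mem hp)
  obtain ⟨σ, hσA, hσl, hσp⟩ :=
    exists_mem_permsOn_apply_eq (mem_insert_self l A) (mem_insert_of_mem hp) hlp.ne ha hb hab
  have hσS : σ ∉ S := fun h => hfree (mem_image.mpr ⟨σ, h, by rw [hσl, hσp]⟩)
  have hτS : σ * swap l p ∉ S := fun h =>
    hfree (mem_image.mpr ⟨_, h, by simp [hσl, hσp, Sym2.eq_swap]⟩)
  exact ⟨⟨σ, hσA, hσS⟩, ⟨σ * swap l p, mul_mem hσA hlpA, hτS⟩, hσl, by simp [hσp],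
    l, p, hlp, rfl⟩

theorem exists_reachable_card_blockOf_le (hS : S.card < A.card) (hp : p ∈ A) (hlp : X.Adj l p)
    (σ : ↥((permsOn (insert l A) : Set (Perm V)) \ ↑S)) :
    ∃ τ, (blockOf S l (τ.1 l)).card ≤ A.card - 2 ∧
      (transpositionGraphOn X (insert l A) S).Reachable σ τ := by
  by_cases hσ : (blockOf S l (σ.1 l)).card ≤ A.card - 2
  · exact ⟨σ, hσ, .rfl⟩
  rw [not_le] at hσ
  have hσp : σ.1 p ≠ σ.1 l := fun h => hlp.ne (σ.1.injective h).symm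
  have hτS : σ.1 * swap l p ∉ S := fun h =>
    hσp (by simpa using forall_apply_eq_of_lt_card_blockOf hS hσ _ h)
  have hlpA : swap l p ∈ permsOn (insert l A) :=
    swap_mem_permsOn (mem_insert_self l A) (mem_insert_of_mem hp)
  refine ⟨⟨σ.1 * swap l p, mul_mem σ.2.1 hlpA, hτS⟩, ?_, Adj.reachable ⟨l, p, hlp, rfl⟩⟩
  by_contra! h
  exact hσp (by simpa using eq_of_lt_card_blockOf hS h hσ)

theorem notMem_blockedPairs_or_exists_detour (hl : l ∉ A) (hS : S.card < A.card)
    (ha : a ∈ insert l A) (hb : b ∈ insert l A) (hab : a ≠ b)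
    (ha' : (blockOf S l a).card ≤ A.card - 2) (hb' : (blockOf S l b).card ≤ A.card - 2) :
    s(a, b) ∉ blockedPairs S l p ∨ ∃ d ∈ insert l A, d ≠ a ∧ d ≠ b ∧
      (blockOf S l d).card ≤ A.card - 2 ∧
      s(a, d) ∉ blockedPairs S l p ∧ s(d, b) ∉ blockedPairs S l p := by
  by_cases hbad : ∃ c, A.card - 2 < (blockOf S l c).card
  · obtain ⟨c, hc⟩ := hbad
    refine .inl fun hab' => ?_
    obtain ⟨s, hs, hsab⟩ := mem_image.mp hab'
    rw [forall_apply_eq_of_lt_card_blockOf hS hc s hs] at hsab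
    rcases Sym2.eq_iff.mp hsab with ⟨rfl, -⟩ | ⟨rfl, -⟩ <;> omega
  simp only [not_exists, not_lt] at hbad
  have hE : (blockedPairs S l p).card + 2 ≤ (insert l A).card := by
    have := card_image_le (s := S) (f := fun s => s(s l, s p))
    rw [card_insert_of_notMem hl]
    unfold blockedPairs
    omega
  rcases sym2_notMem_or_exists_detour hE ha hb hab with h | ⟨d, hd, hda, hdb, had, hdb'⟩
  · exact .inl h
  · exact .inr ⟨d, hd, hda, hdb, hbad d, had, hdb'⟩

variable [Fintype V]

theorem reachable_of_apply_eq (hl : l ∉ A)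
    (ih : ∀ S' : Finset (Perm V), S'.card ≤ A.card - 2 → (transpositionGraphOn X A S').Preconnected)
    (ha : (blockOf S l a).card ≤ A.card - 2)
    {σ τ : ↥((permsOn (insert l A) : Set (Perm V)) \ ↑S)} (hσ : σ.1 l = a) (hτ : τ.1 l = a) :
    (transpositionGraphOn X (insert l A) S).Reachable σ τ := by
  have haA : a ∈ insert l A := hσ ▸ apply_mem_of_mem_permsOn σ.2.1 (mem_insert_self l A)
  let φ : transpositionGraph X →g transpositionGraph X :=
    ⟨(swap a l * ·), transpositionGraph_adj_mul_left _⟩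
  let S' := (blockOf S l a).image φ
  have hφS : Set.MapsTo φ ((permsOn A : Set (Perm V)) \ S') ((permsOn (insert l A) : Set (Perm V)) \ S) := by
    rintro ρ ⟨hρA, hρS'⟩
    refine ⟨mul_mem (swap_mem_permsOn haA (mem_insert_self l A))
      (permsOn_mono (subset_insert l A) hρA), fun hS => hρS' ?_⟩
    have : ρ l = l := mem_permsOn.mp hρA l hl
    exact mem_image.mpr ⟨φ ρ, mem_filter.mpr ⟨hS, by simp [φ, this]⟩, swap_mul_self_mul _ _ _⟩
  have hφ : ∀ ρ : ↥((permsOn (insert l A) : Set (Perm V)) \ ↑S), ρ.1 l = a →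
      φ ρ ∈ (permsOn A : Set (Perm V)) \ S' := by
    rintro ⟨ρ, hρA, hρS⟩ hρ
    refine ⟨mem_permsOn.mpr fun x hx => ?_, ?_⟩
    · by_cases hxl : x = l
      · subst hxl
        simp [φ, hρ]
      · have hx' : x ∉ insert l A := by simp [hxl, hx]
        change swap a l (ρ x) = x
        rw [mem_permsOn.mp hρA x hx']
        exact swap_apply_of_ne_of_ne (by rintro rfl; exact hx' haA) hxl
    · simp only [S', coe_image, Set.mem_image, not_exists, not_and]
      intro s hs hsρ
      exact hρS (mul_left_cancel hsρ ▸ (mem_filter.mp hs).1)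
  have := (ih S' (card_image_le.trans ha) ⟨_, hφ σ hσ⟩ ⟨_, hφ τ hτ⟩).map (induceHom φ hφS)
  convert this <;> exact Subtype.ext (swap_mul_self_mul _ _ _).symm

theorem reachable_of_notMem_blockedPairs (hl : l ∉ A)
    (ih : ∀ S' : Finset (Perm V), S'.card ≤ A.card - 2 → (transpositionGraphOn X A S').Preconnected)
    (hp : p ∈ A) (hlp : X.Adj l p) (ha : (blockOf S l a).card ≤ A.card - 2)
    (hb : (blockOf S l b).card ≤ A.card - 2) (hab : a ≠ b) (hfree : s(a, b) ∉ blockedPairs S l p)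
    {σ τ : ↥((permsOn (insert l A) : Set (Perm V)) \ ↑S)} (hσ : σ.1 l = a) (hτ : τ.1 l = b) :
    (transpositionGraphOn X (insert l A) S).Reachable σ τ := by
  obtain ⟨σ', τ', hσ', hτ', hadj⟩ := exists_adj_of_notMem_blockedPairs hp hlp
    (hσ ▸ apply_mem_of_mem_permsOn σ.2.1 (mem_insert_self l A))
    (hτ ▸ apply_mem_of_mem_permsOn τ.2.1 (mem_insert_self l A)) hab hfree
  exact (reachable_of_apply_eq hl ih ha hσ hσ').trans
    (hadj.reachable.trans (reachable_of_apply_eq hl ih hb hτ' hτ))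

theorem preconnected_transpositionGraphOn_insert (hl : l ∉ A) (hp : p ∈ A) (hlp : X.Adj l p)
    (ih : ∀ S' : Finset (Perm V), S'.card ≤ A.card - 2 → (transpositionGraphOn X A S').Preconnected)
    (hS : S.card < A.card) : (transpositionGraphOn X (insert l A) S).Preconnected := by
  have hmem : ∀ σ : ↥((permsOn (insert l A) : Set (Perm V)) \ ↑S), σ.1 l ∈ insert l A :=
    fun σ => apply_mem_of_mem_permsOn σ.2.1 (mem_insert_self l A)
  intro σ τ
  obtain ⟨σ₁, hσ₁, hσσ₁⟩ := exists_reachable_card_blockOf_le hS hp hlp σ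
  obtain ⟨τ₁, hτ₁, hττ₁⟩ := exists_reachable_card_blockOf_le hS hp hlp τ
  refine hσσ₁.trans (Reachable.trans ?_ hττ₁.symm)
  by_cases hab : σ₁.1 l = τ₁.1 l
  · exact reachable_of_apply_eq hl ih hσ₁ rfl hab.symm
  rcases notMem_blockedPairs_or_exists_detour (p := p) hl hS (hmem σ₁) (hmem τ₁) hab hσ₁ hτ₁
    with hfree | ⟨d, hd, hda, hdb, hd', had, hdb'⟩
  · exact reachable_of_notMem_blockedPairs hl ih hp hlp hσ₁ hτ₁ hab hfree rfl rfl
  obtain ⟨-, ρ, -, hρ, -⟩ :=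
    exists_adj_of_notMem_blockedPairs hp hlp (hmem σ₁) hd (Ne.symm hda) had
  exact (reachable_of_notMem_blockedPairs hl ih hp hlp hσ₁ hd' (Ne.symm hda) had rfl hρ).trans
    (reachable_of_notMem_blockedPairs hl ih hp hlp hd' hτ₁ hdb hdb' hρ rfl)

end InsertStep

theorem preconnected_transpositionGraphOn_univ [Fintype V] [DecidableEq V] {X : SimpleGraph V}
    (hX : X.Connected) {S : Finset (Perm V)} (hS : S.card ≤ Fintype.card V - 2) :
    (transpositionGraphOn X univ S).Preconnected := by
  obtain ⟨v⟩ := hX.nonempty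
  refine hX.induction_on_insert_adj (v := v) (P := fun A => ∀ S : Finset (Perm V),
    S.card ≤ A.card - 2 → (transpositionGraphOn X A S).Preconnected) ?_ ?_ S hS
  · intro S _ σ τ
    have hσ := σ.2.1
    have hτ := τ.2.1
    simp only [permsOn_singleton, Subgroup.coe_bot, Set.mem_singleton_iff] at hσ hτ
    exact Subtype.ext (hσ.trans hτ.symm) ▸ .rfl
  · intro A l p hl hp hlp ih S hS
    rw [card_insert_of_notMem hl] at hS
    have := card_pos.mpr ⟨p, hp⟩
    exact preconnected_transpositionGraphOn_insert hl hp hlp ih (by omega)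

theorem kConnected_transpositionGraph [Fintype V] [DecidableEq V] {X : SimpleGraph V}
    (hX : X.Connected) : KConnected (transpositionGraph X) (Fintype.card V - 1) := by
  intro S hS hSV
  have hpre := preconnected_transpositionGraphOn_univ hX (S := hS.toFinset)
    (by rw [← Set.ncard_eq_toFinset_card S hS]; omega)
  have hcompl : (permsOn (univ : Finset V) : Set (Perm V)) \ hS.toFinset = Sᶜ := by
    simp [permsOn_univ, Set.compl_eq_univ_sdiff]
  rw [transpositionGraphOn, hcompl] at hpre
  obtain ⟨σ, hσ⟩ : Sᶜ.Nonempty := by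
    refine Set.nonempty_compl.mpr fun hSu => ?_
    have := Nat.self_le_factorial (Fintype.card V)
    rw [hSu, Set.ncard_univ, Nat.card_eq_fintype_card, Fintype.card_perm] at hSV
    omega
  have : Nonempty ↥Sᶜ := ⟨⟨σ, hσ⟩⟩
  exact ⟨hpre⟩

/-- Exchangeability criterion for `k`-connectivity: if for every permutation
`σ` and every edge `(u, v)` of `X` there are `k` internally disjoint paths
between `σ` and `σ ∘ (u v)` in `FS(X, Y)`, then `FS(X, Y)` is `k`-connected. -/
theorem stmt_9 (n k : ℕ) (hn : k + 1 ≤ n) (X Y : SimpleGraph (Fin n))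
    (hX : X.Connected)
    (h : ∀ (σ : Equiv.Perm (Fin n)) (u v : Fin n), X.Adj u v →
      IntDisjPaths (FS X Y) k σ (σ * Equiv.swap u v)) :
    KConnected (FS X Y) k := by
  refine ((kConnected_transpositionGraph hX).mono ?_).of_adj_intDisjPaths ?_
  · simp only [Fintype.card_fin]
    omega
  · rintro σ _ ⟨u, v, huv, rfl⟩
    exact h σ u v huv
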